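/- arXiv:2112.04862 — 4 statements merged into one kernel-verified Lean document; each statement's English description precedes it below -/
import Mathlib

section
/- In an abelian category, given a pullback square b∘f = g∘a (a : A → C, f : A → B, b : B → D, g : C → D), the square is also a pushout if and only if the induced map Coker(a) → Coker(b) is an isomorphism. -/
open CategoryTheory Limits

/-- In an abelian category, given a pullback square `f ≫ b = a ≫ g`
(`a : A ⟶ C`, `f : A ⟶ B`, `b : B ⟶ D`, `g : C ⟶ D`), the square is also a pushout
if and only if the induced map `Coker a ⟶ Coker b` is an isomorphism. -/
theorem stmt2 {𝒜 : Type*} [Category 𝒜] [Abelian 𝒜]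
    {A B C D : 𝒜} (a : A ⟶ C) (f : A ⟶ B) (b : B ⟶ D) (g : C ⟶ D)
    (h : IsPullback f a b g) :
    IsPushout f a b g ↔ IsIso (cokernel.map a b f g h.w.symm) := by
  constructor
  · intro hp
    -- construct an explicit inverse using the pushout property
    have hw : f ≫ (0 : B ⟶ cokernel a) = a ≫ cokernel.π a := by simp
    set d : D ⟶ cokernel a := hp.desc 0 (cokernel.π a) hw with hd
    have hbd : b ≫ d = 0 := hp.inl_desc _ _ _
    have hgd : g ≫ d = cokernel.π a := hp.inr_desc _ _ _
    set ψ : cokernel b ⟶ cokernel a := cokernel.desc b d hbd with hψ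
    refine ⟨ψ, ?_, ?_⟩
    · rw [← cancel_epi (cokernel.π a)]
      simp [ψ, hgd]
    · rw [← cancel_epi (cokernel.π b)]
      have : cokernel.π b ≫ ψ ≫ cokernel.map a b f g h.w.symm
          = d ≫ cokernel.map a b f g h.w.symm := by
        simp [ψ]
      rw [this, Category.comp_id]
      apply hp.hom_ext
      · rw [← Category.assoc, hbd, zero_comp, cokernel.condition]
      · rw [← Category.assoc, hgd]
        simp
  · intro hi
    -- notation for the difference maps
    set u : A ⟶ B ⊞ C := biprod.lift f (-a) with hu
    set v : B ⊞ C ⟶ D := biprod.desc b g with hv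
    set e : B ⊞ C ⟶ B ⊞ C := biprod.map (𝟙 B) (-𝟙 C) with he
    have hee : e ≫ e = 𝟙 _ := by ext <;> simp [e]
    have hev : e ≫ v = biprod.desc b (-g) := by ext <;> simp [e, v]
    have huv : u ≫ v = 0 := by
      simp [u, v, h.w]
    -- step 1 : `v` is an epimorphism
    have hbπ : b ≫ cokernel.π v = 0 := by
      rw [show b = biprod.inl ≫ v by simp [v], Category.assoc, cokernel.condition, comp_zero]
    have hgπ : g ≫ cokernel.π v = 0 := by
      rw [show g = biprod.inr ≫ v by simp [v], Category.assoc, cokernel.condition, comp_zero]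
    have hepi : Epi v := by
      apply CategoryTheory.Abelian.epi_of_cokernel_π_eq_zero
      have hc : cokernel.map a b f g h.w.symm ≫ cokernel.desc b (cokernel.π v) hbπ = 0 := by
        rw [← cancel_epi (cokernel.π a)]
        simp [hgπ]
      have hc0 : cokernel.desc b (cokernel.π v) hbπ = 0 := by
        have : cokernel.map a b f g h.w.symm ≫ cokernel.desc b (cokernel.π v) hbπ
            = cokernel.map a b f g h.w.symm ≫ 0 := by rw [hc, comp_zero]
        exact (cancel_epi _).1 this
      calc cokernel.π v = cokernel.π b ≫ cokernel.desc b (cokernel.π v) hbπ := by simp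
        _ = 0 := by rw [hc0, comp_zero]
    -- step 2 : `u` is a kernel of `v` (from the pullback property)
    have hk : IsLimit (KernelFork.ofι u huv) := by
      have hK := h.isLimitKernelFork
      refine KernelFork.IsLimit.ofι u huv
        (fun {W'} w hw => (KernelFork.IsLimit.lift' hK (w ≫ e) ?_).1)
        (fun {W'} w hw => ?_) (fun {W'} w hw m hm => ?_)
      · have : (w ≫ e) ≫ biprod.desc b (-g) = w ≫ v := by
          rw [← hev, Category.assoc, ← Category.assoc e e v, hee, Category.id_comp]
        rw [this, hw]
      · have hfac : (KernelFork.IsLimit.lift' hK (w ≫ e)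
            (by rw [← hev, Category.assoc, ← Category.assoc e e v, hee,
              Category.id_comp, hw])).1 ≫ biprod.lift f a = w ≫ e :=
          (KernelFork.IsLimit.lift' hK (w ≫ e)
            (by rw [← hev, Category.assoc, ← Category.assoc e e v, hee,
              Category.id_comp, hw])).2
        have hia : biprod.lift f a ≫ e = u := by ext <;> simp [e, u]
        calc _ ≫ u = _ ≫ biprod.lift f a ≫ e := by rw [hia]
          _ = (w ≫ e) ≫ e := by rw [← Category.assoc, hfac]
          _ = w := by rw [Category.assoc, hee, Category.comp_id]
      · -- uniqueness : `u` is mono since `biprod.lift f a` is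
        have hmono : Mono u := by
          have : Mono (biprod.lift f a) := mono_of_isLimit_fork hK
          have hia : biprod.lift f a ≫ e = u := by ext <;> simp [e, u]
          rw [← hia]; exact mono_comp _ _
        have hfac : (KernelFork.IsLimit.lift' hK (w ≫ e)
            (by rw [← hev, Category.assoc, ← Category.assoc e e v, hee,
              Category.id_comp, hw])).1 ≫ biprod.lift f a = w ≫ e :=
          (KernelFork.IsLimit.lift' hK (w ≫ e)
            (by rw [← hev, Category.assoc, ← Category.assoc e e v, hee,
              Category.id_comp, hw])).2
        have hia : biprod.lift f a ≫ e = u := by ext <;> simp [e, u]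
        rw [← cancel_mono u, hm]
        calc w = (w ≫ e) ≫ e := by rw [Category.assoc, hee, Category.comp_id]
          _ = (_ ≫ biprod.lift f a) ≫ e := by rw [hfac]
          _ = _ ≫ u := by rw [Category.assoc, hia]
    -- step 3 : since `v` is epi, it is the cokernel of its kernel `u`
    have hcolim : IsColimit (CokernelCofork.ofπ v huv) :=
      Abelian.epiIsCokernelOfKernel _ hk
    -- conclude via the equivalence between pushout squares and cokernel coforks
    exact IsPushout.of_isColimit
      (h.toCommSq.isColimitEquivIsColimitCokernelCofork.symm hcolim)
end

section
/- In an abelian category, if a commutative square b∘f = g∘a is a pushout, then the induced maps Ker(a) → Ker(b) and Ker(f) → Ker(g) are epimorphisms. -/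
open CategoryTheory Limits

/-- In an abelian category, if a commutative square `f ≫ b = a ≫ g` is a pushout,
then the induced maps `Ker a ⟶ Ker b` and `Ker f ⟶ Ker g` are epimorphisms. -/
theorem stmt3 {𝒜 : Type*} [Category 𝒜] [Abelian 𝒜]
    {A B C D : 𝒜} (a : A ⟶ C) (f : A ⟶ B) (b : B ⟶ D) (g : C ⟶ D)
    (h : IsPushout f a b g) :
    Epi (kernel.map a b f g h.w.symm) ∧ Epi (kernel.map f g a b h.w) :=
  ⟨Abelian.epi_kernel_map_of_isPushout h.flip, Abelian.epi_kernel_map_of_isPushout h⟩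
end

section
/- Let A, B be rings and M an (A,B)-bimodule. A triple (X, Y, φ), where φ : M⊗_B Y → X is an A-module map, is a projective object of Rep(A,M,B) (equivalently, of left modules over the triangular matrix ring [[A,M],[0,B]]) if and only if Y is a projective B-module, φ is injective, and Coker(φ) is a projective A-module. -/
set_option linter.unusedSectionVars false

open MulOpposite

universe u

section RepT

variable (A B M : Type u) [Ring A] [Ring B]
  [AddCommGroup M] [Module A M] [Module Bᵐᵒᵖ M] [SMulCommClass A Bᵐᵒᵖ M]

/-- Data exhibiting an `A`-module `T` as the tensor product `M ⊗_B Y` of the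
`(A,B)`-bimodule `M` with a left `B`-module `Y`, i.e. a `B`-balanced, `A`-compatible
biadditive map `τ : M × Y → T` which is universal among such maps. -/
structure TensorData (Y : Type u) [AddCommGroup Y] [Module B Y] where
  T : Type u
  [addT : AddCommGroup T]
  [modT : Module A T]
  τ : M → Y → T
  add_left : ∀ m m' y, τ (m + m') y = τ m y + τ m' y
  add_right : ∀ m y y', τ m (y + y') = τ m y + τ m y'
  balanced : ∀ (b : B) m y, τ (op b • m) y = τ m (b • y)
  smul_left : ∀ (a : A) m y, τ (a • m) y = a • τ m y
  universal : ∀ (Z : Type u) [AddCommGroup Z] [Module A Z] (β : M → Y → Z),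
    (∀ m m' y, β (m + m') y = β m y + β m' y) →
    (∀ m y y', β m (y + y') = β m y + β m y') →
    (∀ (b : B) m y, β (op b • m) y = β m (b • y)) →
    (∀ (a : A) m y, β (a • m) y = a • β m y) →
    ∃! h : T →ₗ[A] Z, ∀ m y, h (τ m y) = β m y

attribute [instance] TensorData.addT TensorData.modT

/-- An object of the category `Rep(A,M,B)` (equivalent to the category of left modules
over the triangular matrix ring `[[A,M],[0,B]]`): a triple `(X, Y, φ)` where `X` is a
left `A`-module, `Y` a left `B`-module and `φ : M ⊗_B Y → X` is `A`-linear; the tensor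
product `M ⊗_B Y` is recorded via its universal property. -/
structure RepObj where
  X : Type u
  [addX : AddCommGroup X]
  [modX : Module A X]
  Y : Type u
  [addY : AddCommGroup Y]
  [modY : Module B Y]
  td : TensorData A B M Y
  φ : td.T →ₗ[A] X

attribute [instance] RepObj.addX RepObj.modX RepObj.addY RepObj.modY

variable {A B M}

/-- A morphism of `Rep(A,M,B)`: a pair `(f, g)` with `f ∘ φ₁ = φ₂ ∘ (1_M ⊗ g)`. -/
structure RepHom (T₁ T₂ : RepObj A B M) where
  f : T₁.X →ₗ[A] T₂.X
  g : T₁.Y →ₗ[B] T₂.Y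
  comm : ∀ m y, f (T₁.φ (T₁.td.τ m y)) = T₂.φ (T₂.td.τ m (g y))

/-- A short exact sequence in `Rep(A,M,B)` (exactness is componentwise). -/
structure RepSES (T₁ T₂ T₃ : RepObj A B M) where
  i : RepHom T₁ T₂
  p : RepHom T₂ T₃
  inj_f : Function.Injective i.f
  inj_g : Function.Injective i.g
  surj_f : Function.Surjective p.f
  surj_g : Function.Surjective p.g
  exact_f : LinearMap.range i.f = LinearMap.ker p.f
  exact_g : LinearMap.range i.g = LinearMap.ker p.g

/-- `P` is a projective object of `Rep(A,M,B)`: every morphism from `P` lifts along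
every epimorphism (epimorphisms are the componentwise surjective morphisms). -/
def RepObj.IsProjObj (P : RepObj A B M) : Prop :=
  ∀ (T₁ T₂ : RepObj A B M) (u : RepHom T₁ T₂),
    Function.Surjective u.f → Function.Surjective u.g →
    ∀ h : RepHom P T₂, ∃ h' : RepHom P T₁,
      (∀ x, u.f (h'.f x) = h.f x) ∧ (∀ y, u.g (h'.g y) = h.g y)

end RepT

variable {A B M : Type u} [Ring A] [Ring B]
  [AddCommGroup M] [Module A M] [Module Bᵐᵒᵖ M] [SMulCommClass A Bᵐᵒᵖ M]

/-!
A projective object is a retract of the free object `(M ⊗ B^(Y) ⊕ A^(X), B^(Y), inl)` covering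
it, and a retraction of that cover exhibits `Y` as a retract of `B^(Y)`, the map `φ` as split
injective and `Coker φ` as a retract of `A^(X)`.

Conversely, if `φ` is injective with projective cokernel then `X ≅ (M ⊗ Y) ⊕ Coker φ` with `φ`
the first inclusion. A morphism out of `P` then lifts along an epimorphism by lifting its
`Y`-component `g` through the projective `Y`, using `φ₁ ∘ (1 ⊗ g)` on the first summand and
lifting freely on the projective second summand.
-/

open LinearMap

namespace TensorData

section

variable {Y : Type u} [AddCommGroup Y] [Module B Y] (td : TensorData A B M Y)

theorem hom_ext {Z : Type u} [AddCommGroup Z] [Module A Z] {h₁ h₂ : td.T →ₗ[A] Z}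
    (H : ∀ m y, h₁ (td.τ m y) = h₂ (td.τ m y)) : h₁ = h₂ := by
  obtain ⟨h, -, huniq⟩ := td.universal Z (fun m y => h₁ (td.τ m y))
    (fun m m' y => by rw [td.add_left, map_add])
    (fun m y y' => by rw [td.add_right, map_add])
    (fun b m y => by rw [td.balanced])
    (fun a m y => by rw [td.smul_left, map_smul])
  rw [huniq h₁ fun m y => rfl, huniq h₂ fun m y => (H m y).symm]

noncomputable def lift {Z : Type u} [AddCommGroup Z] [Module A Z] (β : M → Y → Z)
    (add_left : ∀ m m' y, β (m + m') y = β m y + β m' y)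
    (add_right : ∀ m y y', β m (y + y') = β m y + β m y')
    (balanced : ∀ (b : B) m y, β (op b • m) y = β m (b • y))
    (smul_left : ∀ (a : A) m y, β (a • m) y = a • β m y) : td.T →ₗ[A] Z :=
  (td.universal Z β add_left add_right balanced smul_left).exists.choose

theorem lift_τ {Z : Type u} [AddCommGroup Z] [Module A Z] (β : M → Y → Z)
    (add_left : ∀ m m' y, β (m + m') y = β m y + β m' y)
    (add_right : ∀ m y y', β m (y + y') = β m y + β m y')
    (balanced : ∀ (b : B) m y, β (op b • m) y = β m (b • y))
    (smul_left : ∀ (a : A) m y, β (a • m) y = a • β m y) (m : M) (y : Y) :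
    td.lift β add_left add_right balanced smul_left (td.τ m y) = β m y :=
  (td.universal Z β add_left add_right balanced smul_left).exists.choose_spec m y

end

section

variable {Y Y' Y'' : Type u} [AddCommGroup Y] [Module B Y] [AddCommGroup Y'] [Module B Y']
  [AddCommGroup Y''] [Module B Y'']

/-- The map `1_M ⊗ g : M ⊗_B Y → M ⊗_B Y'`. -/
noncomputable def map (td : TensorData A B M Y) (td' : TensorData A B M Y') (g : Y →ₗ[B] Y') :
    td.T →ₗ[A] td'.T :=
  td.lift (fun m y => td'.τ m (g y)) (fun m m' y => td'.add_left m m' (g y))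
    (fun m y y' => by rw [map_add, td'.add_right])
    (fun b m y => by rw [td'.balanced, map_smul])
    (fun a m y => td'.smul_left a m (g y))

@[simp]
theorem map_τ (td : TensorData A B M Y) (td' : TensorData A B M Y') (g : Y →ₗ[B] Y')
    (m : M) (y : Y) : map td td' g (td.τ m y) = td'.τ m (g y) :=
  td.lift_τ _ _ _ _ _ m y

@[simp]
theorem map_id (td : TensorData A B M Y) : map td td LinearMap.id = LinearMap.id :=
  td.hom_ext fun m y => by simp

theorem map_comp (td : TensorData A B M Y) (td' : TensorData A B M Y')
    (td'' : TensorData A B M Y'') (g : Y →ₗ[B] Y') (g' : Y' →ₗ[B] Y'') :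
    map td' td'' g' ∘ₗ map td td' g = map td td'' (g' ∘ₗ g) :=
  td.hom_ext fun m y => by simp

end

/-- `M ⊗_B (ι →₀ B) = ι →₀ M`, with `m ⊗ f = (i ↦ m f(i))`. -/
noncomputable def finsupp (ι : Type u) : TensorData A B M (ι →₀ B) where
  T := ι →₀ M
  τ m f := f.mapRange (fun b => op b • m) (by simp)
  add_left m m' f := by ext i; simp [smul_add]
  add_right m f f' := by ext i; simp [add_smul]
  balanced b m f := by ext i; simp [op_mul, mul_smul]
  smul_left a m f := by ext i; exact (smul_comm a (op (f i)) m).symm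
  universal Z _ _ β add_left add_right balanced smul_left := by
    let βi : ι → M →ₗ[A] Z := fun i =>
      { toFun := fun m => β m (Finsupp.single i 1)
        map_add' := fun m m' => add_left m m' _
        map_smul' := fun a m => smul_left a m _ }
    have hβ : ∀ m (f : ι →₀ B),
        Finsupp.lsum ℕ βi (f.mapRange (fun b => op b • m) (by simp)) = β m f := by
      intro m f
      induction f using Finsupp.induction_linear with
      | zero => simpa using ((AddMonoidHom.mk' (β m) (add_right m)).map_zero).symm
      | add f f' hf hf' => rw [Finsupp.mapRange_add (by simp [add_smul]), map_add, hf, hf',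
          add_right]
      | single i b =>
        rw [Finsupp.mapRange_single, Finsupp.lsum_single]
        change β (op b • m) (Finsupp.single i 1) = _
        rw [balanced, Finsupp.smul_single, smul_eq_mul, mul_one]
    refine ⟨Finsupp.lsum ℕ βi, hβ, fun h hh => Finsupp.lhom_ext fun i m => ?_⟩
    have hsingle : (Finsupp.single i m : ι →₀ M)
        = (Finsupp.single i (1 : B)).mapRange (fun b => op b • m) (by simp) := by simp
    rw [hsingle, hh, hβ]

end TensorData

namespace RepHom

variable {T₁ T₂ : RepObj A B M}

theorem comp_φ (u : RepHom T₁ T₂) :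
    u.f ∘ₗ T₁.φ = T₂.φ ∘ₗ TensorData.map T₁.td T₂.td u.g :=
  T₁.td.hom_ext fun m y => by simpa using u.comm m y

def ofComp (f : T₁.X →ₗ[A] T₂.X) (g : T₁.Y →ₗ[B] T₂.Y)
    (h : f ∘ₗ T₁.φ = T₂.φ ∘ₗ TensorData.map T₁.td T₂.td g) : RepHom T₁ T₂ where
  f := f
  g := g
  comm m y := by simpa using LinearMap.congr_fun h (T₁.td.τ m y)

def id (T : RepObj A B M) : RepHom T T where
  f := LinearMap.id
  g := LinearMap.id
  comm _ _ := rfl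

end RepHom

theorem exists_linearEquiv_prod_of_injective_of_projective_quotient {R X T : Type*} [Ring R]
    [AddCommGroup X] [Module R X] [AddCommGroup T] [Module R T] (φ : T →ₗ[R] X)
    (hφ : Function.Injective φ) [Module.Projective R (X ⧸ range φ)] :
    ∃ e : X ≃ₗ[R] T × (X ⧸ range φ), ∀ t, e.symm (t, 0) = φ t := by
  obtain ⟨s, hs⟩ := Module.projective_lifting_property (range φ).mkQ LinearMap.id
    (range φ).mkQ_surjective
  have hsplit := (Function.Exact.split_tfae' (exact_map_mkQ_range φ)).out 0 2
  obtain ⟨e, he, -⟩ := hsplit.mp ⟨hφ, s, hs⟩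
  exact ⟨e, fun t => (LinearMap.congr_fun he t).symm⟩

namespace RepObj

variable (P : RepObj A B M)

theorem isProjObj_of_projective [Module.Projective B P.Y] (hφ : Function.Injective P.φ)
    [Module.Projective A (P.X ⧸ range P.φ)] : P.IsProjObj := by
  intro T₁ T₂ u hf hg h
  obtain ⟨g, hug⟩ := Module.projective_lifting_property u.g h.g hg
  obtain ⟨e, he⟩ := exists_linearEquiv_prod_of_injective_of_projective_quotient P.φ hφ
  obtain ⟨f₂, huf₂⟩ :=
    Module.projective_lifting_property u.f (h.f ∘ₗ e.symm.toLinearMap ∘ₗ inr _ _ _) hf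
  set f₁ := T₁.φ ∘ₗ TensorData.map P.td T₁.td g
  have hf₁ : u.f ∘ₗ f₁ = h.f ∘ₗ P.φ := by
    rw [← comp_assoc, u.comp_φ, comp_assoc, TensorData.map_comp, hug, h.comp_φ]
  have hcomm : (f₁.coprod f₂ ∘ₗ e.toLinearMap) ∘ₗ P.φ = f₁ := LinearMap.ext fun t => by
    simp [← he]
  have hlift : u.f ∘ₗ f₁.coprod f₂ ∘ₗ e.toLinearMap = h.f := by
    have hsum : u.f ∘ₗ f₁.coprod f₂ = h.f ∘ₗ e.symm.toLinearMap := by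
      refine prod_ext (LinearMap.ext fun t => ?_) ?_
      · simpa [he] using LinearMap.congr_fun hf₁ t
      · rw [comp_assoc, coprod_inr, huf₂, comp_assoc]
    rw [← comp_assoc, hsum, comp_assoc, e.symm_comp, comp_id]
  exact ⟨RepHom.ofComp _ g hcomm, LinearMap.congr_fun hlift, LinearMap.congr_fun hug⟩

noncomputable abbrev cover : RepObj A B M where
  X := (P.Y →₀ M) × (P.X →₀ A)
  Y := P.Y →₀ B
  td := TensorData.finsupp P.Y
  φ := inl A _ _

noncomputable def coverHom : RepHom P.cover P :=
  RepHom.ofComp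
    ((P.φ ∘ₗ TensorData.map P.cover.td P.td (Finsupp.linearCombination B _root_.id)).coprod
      (Finsupp.linearCombination A _root_.id))
    (Finsupp.linearCombination B _root_.id) (coprod_inl _ _)

theorem coverHom_f_surjective : Function.Surjective P.coverHom.f := fun x =>
  ⟨(0, Finsupp.single x 1), by
    change P.φ (TensorData.map _ P.td _ 0) + Finsupp.linearCombination A _root_.id
      (Finsupp.single x 1) = x
    simp⟩

theorem coverHom_g_surjective : Function.Surjective P.coverHom.g := fun y =>
  ⟨Finsupp.single y 1, by simp [coverHom, RepHom.ofComp, Finsupp.linearCombination_single]⟩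

variable {P}

theorem _root_.RepHom.f_φ_of_cover (σ : RepHom P P.cover) (t : P.td.T) :
    σ.f (P.φ t) = (TensorData.map P.td P.cover.td σ.g t, 0) :=
  LinearMap.congr_fun σ.comp_φ t

theorem projective_Y_of_section (σ : RepHom P P.cover)
    (hσ : P.coverHom.g ∘ₗ σ.g = LinearMap.id) :
    Module.Projective B P.Y :=
  Module.Projective.of_split σ.g P.coverHom.g hσ

theorem injective_φ_of_section (σ : RepHom P P.cover)
    (hσ : P.coverHom.g ∘ₗ σ.g = LinearMap.id) :
    Function.Injective P.φ := by
  have hretract : TensorData.map P.cover.td P.td P.coverHom.g ∘ₗ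
      TensorData.map P.td P.cover.td σ.g = LinearMap.id := by
    rw [TensorData.map_comp, hσ, TensorData.map_id]
  refine Function.LeftInverse.injective
    (g := fun x => TensorData.map P.cover.td P.td P.coverHom.g (σ.f x).1) fun t => ?_
  simpa [σ.f_φ_of_cover] using LinearMap.congr_fun hretract t

theorem projective_coker_of_section (σ : RepHom P P.cover)
    (hσ : P.coverHom.f ∘ₗ σ.f = LinearMap.id) :
    Module.Projective A (P.X ⧸ range P.φ) := by
  have hσx : ∀ x, P.φ (TensorData.map P.cover.td P.td (Finsupp.linearCombination B _root_.id)
      (σ.f x).1) + Finsupp.linearCombination A _root_.id (σ.f x).2 = x :=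
    LinearMap.congr_fun hσ
  let j : P.X →ₗ[A] P.X →₀ A := snd A (P.Y →₀ M) (P.X →₀ A) ∘ₗ σ.f
  have hj : range P.φ ≤ ker j := by
    rintro _ ⟨t, rfl⟩
    change (σ.f (P.φ t)).2 = 0
    rw [σ.f_φ_of_cover]
  refine Module.Projective.of_split ((range P.φ).liftQ j hj)
    ((range P.φ).mkQ ∘ₗ Finsupp.linearCombination A _root_.id) ?_
  refine Submodule.linearMap_qext _ (LinearMap.ext fun x => ?_)
  change (range P.φ).mkQ (Finsupp.linearCombination A _root_.id (σ.f x).2) = (range P.φ).mkQ x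
  conv_rhs => rw [← hσx x, map_add, Submodule.mkQ_apply,
    (Submodule.Quotient.mk_eq_zero _).2 (mem_range_self _ _), zero_add]

end RepObj

/-- Let `A`, `B` be rings and `M` an `(A,B)`-bimodule.  A triple `(X, Y, φ)` with
`φ : M ⊗_B Y → X` `A`-linear is a projective object of `Rep(A,M,B)` (equivalently, of
left modules over the triangular matrix ring `[[A,M],[0,B]]`) if and only if `Y` is a
projective `B`-module, `φ` is injective and `Coker φ` is a projective `A`-module. -/
theorem stmt7 (P : RepObj A B M) :
    P.IsProjObj ↔
      Module.Projective B P.Y ∧ Function.Injective P.φ ∧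
        Module.Projective A (P.X ⧸ LinearMap.range P.φ) := by
  constructor
  · intro hP
    obtain ⟨σ, hσf, hσg⟩ := hP _ _ P.coverHom P.coverHom_f_surjective P.coverHom_g_surjective
      (RepHom.id P)
    have hf : P.coverHom.f ∘ₗ σ.f = LinearMap.id := LinearMap.ext hσf
    have hg : P.coverHom.g ∘ₗ σ.g = LinearMap.id := LinearMap.ext hσg
    exact ⟨RepObj.projective_Y_of_section σ hg, RepObj.injective_φ_of_section σ hg,
      RepObj.projective_coker_of_section σ hf⟩
  · rintro ⟨_, hφ, _⟩
    exact P.isProjObj_of_projective hφ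
end

section
/- Let 𝒮 be a thick triangulated subcategory of a triangulated category 𝒯 and Q : 𝒯 → 𝒯/𝒮 the Verdier quotient functor. If Q admits a right adjoint R, then the pair (𝒮, 𝒮^⊥) is a torsion pair (semiorthogonal decomposition) of 𝒯: for every T ∈ 𝒯 there is a distinguished triangle S → T → Z → S[1] with S ∈ 𝒮 and Z ∈ 𝒮^⊥, where 𝒮^⊥ = {X ∈ 𝒯 : Hom(S,X) = 0 for all S ∈ 𝒮}. -/
/-!
Complete the unit `η_T : T ⟶ R (Q T)` to a distinguished triangle `S ⟶ T ⟶ R (Q T) ⟶ S⟦1⟧`.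
Because `Q` is a localization, `Q η_T` is an isomorphism (its inverse is the counit), so `S`
becomes zero in the Verdier quotient. Then `𝟙_S` and `0` agree after composing with some
`s : S ⟶ Y` whose cone lies in `𝒮`; thus `s = 0`, its cone has `S⟦1⟧` as a retract, and
thickness gives `S ∈ 𝒮`.
On the other side, `Hom(W, R D) ≃ Hom(Q W, D)` turns precomposition with a morphism of
`𝒮.trW` into precomposition with an isomorphism, so `R D` is `𝒮.trW`-local, i.e. lies in `𝒮^⊥`.
-/

open CategoryTheory Limits Pretriangulated

universe v u

namespace CategoryTheory

section

variable {C D : Type*} [Category C] [Category D] {L : C ⥤ D} {G : D ⥤ C}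

lemma Localization.isIso_map_unit_app (adj : L ⊣ G) (W : MorphismProperty C)
    [L.IsLocalization W] (X : C) : IsIso (L.map (adj.unit.app X)) := by
  -- `L η` descends to `τ : 𝟭 D ⟶ G ⋙ L`; naturality of `τ` along the counit gives `ε ≫ L η = 𝟙`.
  let τ : 𝟭 D ⟶ G ⋙ L := Localization.liftNatTrans L W L (L ⋙ G ⋙ L) (𝟭 D) (G ⋙ L)
    (Functor.whiskerRight adj.unit L)
  have hτ (Y : C) : τ.app (L.obj Y) = L.map (adj.unit.app Y) := by
    simp [τ, Localization.liftNatTrans_app, Localization.Lifting.iso]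
  refine ⟨adj.counit.app (L.obj X), adj.left_triangle_components X, ?_⟩
  have hnat := τ.naturality (adj.counit.app (L.obj X))
  dsimp at hnat
  rw [hτ, hτ] at hnat
  rw [hnat, ← L.map_comp, adj.right_triangle_components]
  exact L.map_id _

lemma Adjunction.isLocal_right_obj (adj : L ⊣ G) {W : MorphismProperty C}
    (hW : W.IsInvertedBy L) (Y : D) : W.isLocal (G.obj Y) := by
  intro X₁ X₂ f hf
  have : IsIso (L.map f) := hW f hf
  have hcomp : (fun g : X₂ ⟶ G.obj Y ↦ f ≫ g) = adj.homEquiv X₁ Y ∘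
      (fun g : L.obj X₂ ⟶ Y ↦ L.map f ≫ g) ∘ (adj.homEquiv X₂ Y).symm := by
    ext g
    simp [adj.homEquiv_naturality_left]
  rw [hcomp]
  exact (adj.homEquiv X₁ Y).bijective.comp
    ((asIso (L.map f)).symm.homFromEquiv.bijective.comp (adj.homEquiv X₂ Y).symm.bijective)

end

lemma Localization.isIso_map_of_isIso_map {C D₁ D₂ : Type*} [Category C] [Category D₁]
    [Category D₂] (L₁ : C ⥤ D₁) (L₂ : C ⥤ D₂) (W : MorphismProperty C) [L₁.IsLocalization W]
    [L₂.IsLocalization W] {X Y : C} (f : X ⟶ Y) [IsIso (L₁.map f)] : IsIso (L₂.map f) :=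
  (NatIso.isIso_map_iff (Localization.compUniqFunctor L₁ L₂ W) f).1 (by dsimp; infer_instance)

namespace ObjectProperty

variable {C : Type*} [Category C] [HasZeroObject C] [HasShift C ℤ] [Preadditive C]
  [∀ n : ℤ, (shiftFunctor C n).Additive] [Pretriangulated C]
  (P : ObjectProperty C) [P.IsTriangulated] [P.IsStableUnderRetracts]

lemma prop_of_trW_zero {X Y : C} (h : P.trW (0 : X ⟶ Y)) : P X := by
  obtain ⟨Z, g, δ, hT, hZ⟩ := (P.trW_iff _).1 h
  obtain ⟨r, hr⟩ := Triangle.coyoneda_exact₃ _ (rot_of_distTriang _ hT) (𝟙 (X⟦(1 : ℤ)⟧)) (by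
    dsimp [Triangle.rotate]
    exact (Category.id_comp _).trans (neg_eq_zero.2 (Functor.map_zero _ _ _)))
  rw [← P.prop_shift_iff_of_isStableUnderShift X (1 : ℤ)]
  exact P.prop_of_retract ⟨r, δ, hr.symm⟩ hZ

lemma prop_of_isZero_obj [IsTriangulated C] {D : Type*} [Category D] (L : C ⥤ D)
    [L.IsLocalization P.trW] {X : C} (hX : IsZero (L.obj X)) : P X := by
  obtain ⟨Y, s, hs, fac⟩ :=
    (MorphismProperty.map_eq_iff_postcomp L P.trW (𝟙 X) 0).1 (hX.eq_of_src _ _)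
  rw [Category.id_comp, zero_comp] at fac
  exact P.prop_of_trW_zero (fac ▸ hs)

lemma prop_obj₁_of_isIso_map_mor₂ [IsTriangulated C] {D : Type*} [Category D] (L : C ⥤ D)
    [L.IsLocalization P.trW] {T : Triangle C} (hT : T ∈ distTriang C)
    (h : IsIso (L.map T.mor₂)) : P T.obj₁ := by
  -- Mathlib's triangulated structure lives on the model `P.trW.Q` of the quotient, not on `L`.
  have : IsIso (P.trW.Q.map T.mor₂) := Localization.isIso_map_of_isIso_map L _ P.trW _
  exact P.prop_of_isZero_obj P.trW.Q
    (Triangle.isZero₁_of_isIso₂ _ (P.trW.Q.map_distinguished _ hT) this)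

end ObjectProperty

end CategoryTheory

/-- Let `𝒮` be a thick triangulated subcategory of a triangulated category `𝒯` and
`Q : 𝒯 ⥤ 𝒯/𝒮` the Verdier quotient functor (a localization with respect to the class
`𝒮.W` of morphisms whose cone lies in `𝒮`).  If `Q` admits a right adjoint `R`, then
`(𝒮, 𝒮^⊥)` is a torsion pair: every `T` fits into a distinguished triangle
`S ⟶ T ⟶ Z ⟶ S⟦1⟧` with `S ∈ 𝒮` and `Z ∈ 𝒮^⊥`. -/
theorem stmt18 {𝒯 : Type u} [Category.{v} 𝒯] [HasZeroObject 𝒯] [HasShift 𝒯 ℤ]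
    [Preadditive 𝒯] [∀ n : ℤ, (shiftFunctor 𝒯 n).Additive] [Pretriangulated 𝒯]
    [IsTriangulated 𝒯]
    (𝒮 : ObjectProperty 𝒯) [𝒮.IsTriangulated]
    (hthick : ∀ X Y : 𝒯, 𝒮 Y → ∀ (s : X ⟶ Y) (r : Y ⟶ X), s ≫ r = 𝟙 X → 𝒮 X)
    {𝒟 : Type*} [Category 𝒟] (Q : 𝒯 ⥤ 𝒟) [Q.IsLocalization 𝒮.trW]
    (R : 𝒟 ⥤ 𝒯) (adj : Q ⊣ R) :
    ∀ T : 𝒯, ∃ (S Z : 𝒯) (f : S ⟶ T) (g : T ⟶ Z) (h : Z ⟶ S⟦(1 : ℤ)⟧),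
      (Triangle.mk f g h ∈ distTriang 𝒯) ∧ 𝒮 S ∧
        (∀ (W : 𝒯), 𝒮 W → ∀ u : W ⟶ Z, u = 0) := by
  intro T
  have : 𝒮.IsStableUnderRetracts := ⟨fun e hY ↦ hthick _ _ hY e.i e.r e.retract⟩
  obtain ⟨S, f, h, hT⟩ := distinguished_cocone_triangle₁ (adj.unit.app T)
  have hZ : 𝒮.rightOrthogonal (R.obj (Q.obj T)) := by
    rw [← 𝒮.isLocal_trW]
    exact adj.isLocal_right_obj (Localization.inverts Q 𝒮.trW) _
  exact ⟨S, _, f, _, h, hT, 𝒮.prop_obj₁_of_isIso_map_mor₂ Q hT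
    (Localization.isIso_map_unit_app adj 𝒮.trW T), fun W hW u ↦ hZ u hW⟩
end
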